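/- Conditional on cluster assignments, the within-cluster resampling estimator has variance ∑_{j=1}^k (v_j²/|C_j|)·(E_j[f²] − E_j[f]²), where E_j[f] = ∑_{i∈C_j} (w_i/v_j) f(X^(i)); in particular, if every cluster's conditional weight distribution is degenerate (each cluster contains particles with equal values of f), the variance is zero. -/

import Mathlib

/-!
Each resampled particle contributes `(v_j / |C_j|) f(X'_{j,m})`, a function of one draw, so
by independence the variance of the estimator is the sum of the variances of these terms.
A draw in cluster `j` has law `w_i / v_j` on `C_j`, whence the variance
`E_j[f²] - E_j[f]²` of `f(X'_{j,m})`; summing the `|C_j|` equal terms scaled by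
`(v_j / |C_j|)²` gives `v_j² / |C_j| · (E_j[f²] - E_j[f]²)`.
-/

open MeasureTheory ProbabilityTheory Finset
open scoped ENNReal

section DiscreteRandomVariable

variable {Ω ι : Type*} [MeasurableSpace Ω] {μ : Measure Ω}
  [Fintype ι] [MeasurableSpace ι] [DiscreteMeasurableSpace ι]

lemma integral_comp_eq_sum_measureReal_preimage [IsFiniteMeasure μ] {Y : Ω → ι}
    (hY : Measurable Y) (h : ι → ℝ) :
    ∫ ω, h (Y ω) ∂μ = ∑ i, μ.real (Y ⁻¹' {i}) * h i := by
  rw [← integral_map hY.aemeasurable Measurable.of_discrete.aestronglyMeasurable,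
    integral_fintype Integrable.of_finite]
  simp [map_measureReal_apply hY (measurableSet_singleton _)]

lemma memLp_comp_of_measurable [IsFiniteMeasure μ] {Y : Ω → ι} (hY : Measurable Y)
    (h : ι → ℝ) (p : ℝ≥0∞) : MemLp (fun ω ↦ h (Y ω)) p μ :=
  MemLp.of_discrete.comp_of_map hY.aemeasurable

lemma variance_comp_eq_sum [IsProbabilityMeasure μ] {Y : Ω → ι} (hY : Measurable Y)
    {q : ι → ℝ} (hq : ∀ i, μ.real (Y ⁻¹' {i}) = q i) (h : ι → ℝ) :
    Var[fun ω ↦ h (Y ω); μ] = ∑ i, q i * h i ^ 2 - (∑ i, q i * h i) ^ 2 := by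
  rw [variance_eq_sub (memLp_comp_of_measurable hY h 2)]
  simp only [Pi.pow_apply, integral_comp_eq_sum_measureReal_preimage hY (fun i ↦ h i ^ 2),
    integral_comp_eq_sum_measureReal_preimage hY h, hq]

lemma iIndepFun.variance_sum_comp [IsProbabilityMeasure μ] {κ : Type*} [Fintype κ]
    {Y : κ → Ω → ι} (hY : ∀ p, Measurable (Y p)) (hind : iIndepFun Y μ) (h : κ → ι → ℝ) :
    Var[fun ω ↦ ∑ p, h p (Y p ω); μ] = ∑ p, Var[fun ω ↦ h p (Y p ω); μ] := by
  have hsum : (fun ω ↦ ∑ p, h p (Y p ω)) = ∑ p, fun ω ↦ h p (Y p ω) := by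
    ext ω
    simp only [Finset.sum_apply]
  rw [hsum, IndepFun.variance_sum (X := fun p ω ↦ h p (Y p ω))
    (fun p _ ↦ memLp_comp_of_measurable (hY p) (h p) 2)]
  intro p _ p' _ hpp'
  exact (hind.indepFun hpp').comp Measurable.of_discrete Measurable.of_discrete

end DiscreteRandomVariable

lemma sum_mul_sq_sub_sq_sum_eq_zero {ι R : Type*} [CommRing R] [Nontrivial R] {s : Finset ι}
    {q x : ι → R}
    (hq : ∑ i ∈ s, q i = 1) (hx : ∀ i ∈ s, ∀ i' ∈ s, x i = x i') :
    ∑ i ∈ s, q i * x i ^ 2 - (∑ i ∈ s, q i * x i) ^ 2 = 0 := by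
  obtain ⟨i₀, hi₀⟩ : s.Nonempty := nonempty_of_sum_ne_zero (by rw [hq]; exact one_ne_zero)
  have hconst : ∀ i ∈ s, x i = x i₀ := fun i hi ↦ hx i hi i₀ hi₀
  have hsq : ∑ i ∈ s, q i * x i ^ 2 = x i₀ ^ 2 := by
    rw [sum_congr rfl fun i hi ↦ by rw [hconst i hi], ← sum_mul, hq, one_mul]
  have hlin : ∑ i ∈ s, q i * x i = x i₀ := by
    rw [sum_congr rfl fun i hi ↦ by rw [hconst i hi], ← sum_mul, hq, one_mul]
  rw [hsq, hlin, sub_self]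

lemma mul_div_sq_eq_sq_div {K : Type*} [Field K] (n v : K) : n * (v / n) ^ 2 = v ^ 2 / n := by
  rcases eq_or_ne n 0 with hn | hn
  · simp [hn]
  · field_simp

theorem cluster_resampling_variance_general {α : Type*} (N k : ℕ)
    (X : Fin N → α) (w : Fin N → ℝ) (hw : ∀ i, 0 ≤ w i)
    (C : Fin k → Finset (Fin N))
    (v : Fin k → ℝ) (hv : ∀ j, v j = ∑ i ∈ C j, w i) (hvpos : ∀ j, 0 < v j)
    {Ω : Type*} [MeasurableSpace Ω] (μ : Measure Ω) [IsProbabilityMeasure μ]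
    (Y : (Σ j : Fin k, Fin (C j).card) → Ω → Fin N)
    (hmeas : ∀ p, Measurable (Y p))
    (hlaw : ∀ (p : Σ j : Fin k, Fin (C j).card) (i : Fin N),
      μ (Y p ⁻¹' {i}) = ENNReal.ofReal (if i ∈ C p.1 then w i / v p.1 else 0))
    (hind : iIndepFun Y μ)
    (f : α → ℝ)
    (g : Ω → ℝ)
    (hg : ∀ ω, g ω = ∑ j, (v j / ((C j).card : ℝ)) * ∑ m : Fin (C j).card, f (X (Y ⟨j, m⟩ ω))) :
    (∫ ω, (g ω - ∫ ω', g ω' ∂μ) ^ 2 ∂μ =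
        ∑ j, (v j) ^ 2 / ((C j).card : ℝ) *
          ((∑ i ∈ C j, (w i / v j) * (f (X i)) ^ 2) - (∑ i ∈ C j, (w i / v j) * f (X i)) ^ 2)) ∧
      ((∀ j, ∀ i ∈ C j, ∀ i' ∈ C j, f (X i) = f (X i')) →
        ∫ ω, (g ω - ∫ ω', g ω' ∂μ) ^ 2 ∂μ = 0) := by
  have hlaw_real : ∀ p i, μ.real (Y p ⁻¹' {i}) = if i ∈ C p.1 then w i / v p.1 else 0 := fun p i ↦ by
    rw [measureReal_def, hlaw, ENNReal.toReal_ofReal]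
    split_ifs
    exacts [div_nonneg (hw i) (hvpos p.1).le, le_rfl]
  have hg_sum : g = fun ω ↦ ∑ p, v p.1 / (C p.1).card * f (X (Y p ω)) := by
    ext ω
    rw [hg, ← univ_sigma_univ, sum_sigma]
    simp only [mul_sum]
  have hvar : ∫ ω, (g ω - ∫ ω', g ω' ∂μ) ^ 2 ∂μ = ∑ j, (v j) ^ 2 / ((C j).card : ℝ) *
      ((∑ i ∈ C j, (w i / v j) * (f (X i)) ^ 2) - (∑ i ∈ C j, (w i / v j) * f (X i)) ^ 2) := by
    have hg_meas : Measurable g :=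
      hg_sum ▸ Finset.measurable_fun_sum _ fun p _ ↦
        measurable_const.mul ((Measurable.of_discrete (f := f ∘ X)).comp (hmeas p))
    rw [← variance_eq_integral hg_meas.aemeasurable, hg_sum,
      iIndepFun.variance_sum_comp hmeas hind fun p i ↦ v p.1 / (C p.1).card * f (X i),
      ← univ_sigma_univ, sum_sigma]
    refine sum_congr rfl fun j _ ↦ ?_
    simp only [variance_const_mul, variance_comp_eq_sum (hmeas _) (hlaw_real _) (fun i ↦ f (X i)),
      ite_mul, zero_mul, sum_ite_mem, univ_inter, sum_const, card_univ, Fintype.card_fin, nsmul_eq_mul]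
    rw [← mul_assoc, mul_div_sq_eq_sq_div]
  refine ⟨hvar, fun hconst ↦ hvar ▸ sum_eq_zero fun j _ ↦ ?_⟩
  have hq_sum : ∑ i ∈ C j, w i / v j = 1 := by
    rw [← sum_div, ← hv, div_self (hvpos j).ne']
  rw [sum_mul_sq_sub_sq_sum_eq_zero hq_sum (hconst j), mul_zero]

/-- Variance of the clustering-based weight-adjusted estimator: with independent
within-cluster multinomial draws, the variance equals
`∑ j, (v j)² / |C j| * (E_j[f²] − E_j[f]²)`; in particular it vanishes when `f` is
constant on each cluster. -/
theorem cluster_resampling_variance {α : Type*} (N k : ℕ) (hN : 0 < N)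
    (X : Fin N → α) (w : Fin N → ℝ) (hw : ∀ i, 0 ≤ w i) (hsum : ∑ i, w i = 1)
    (C : Fin k → Finset (Fin N)) (hne : ∀ j, (C j).Nonempty)
    (hdisj : ∀ j j', j ≠ j' → Disjoint (C j) (C j'))
    (hcover : ∀ i, ∃ j, i ∈ C j)
    (v : Fin k → ℝ) (hv : ∀ j, v j = ∑ i ∈ C j, w i) (hvpos : ∀ j, 0 < v j)
    {Ω : Type*} [MeasurableSpace Ω] (μ : Measure Ω) [IsProbabilityMeasure μ]
    (Y : (Σ j : Fin k, Fin (C j).card) → Ω → Fin N)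
    (hmeas : ∀ p, Measurable (Y p))
    (hlaw : ∀ (p : Σ j : Fin k, Fin (C j).card) (i : Fin N),
      μ (Y p ⁻¹' {i}) = ENNReal.ofReal (if i ∈ C p.1 then w i / v p.1 else 0))
    (hind : iIndepFun Y μ)
    (f : α → ℝ)
    (g : Ω → ℝ)
    (hg : ∀ ω, g ω = ∑ j, (v j / ((C j).card : ℝ)) * ∑ m : Fin (C j).card, f (X (Y ⟨j, m⟩ ω))) :
    (∫ ω, (g ω - ∫ ω', g ω' ∂μ) ^ 2 ∂μ =
        ∑ j, (v j) ^ 2 / ((C j).card : ℝ) *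
          ((∑ i ∈ C j, (w i / v j) * (f (X i)) ^ 2) - (∑ i ∈ C j, (w i / v j) * f (X i)) ^ 2)) ∧
      ((∀ j, ∀ i ∈ C j, ∀ i' ∈ C j, f (X i) = f (X i')) →
        ∫ ω, (g ω - ∫ ω', g ω' ∂μ) ^ 2 ∂μ = 0) :=
  cluster_resampling_variance_general N k X w hw C v hv hvpos μ Y hmeas hlaw hind f g hg
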